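/- arXiv:1708.09041 — 7 statements merged into one kernel-verified Lean document; each statement's English description precedes it below -/
import Mathlib

section
/- Let ψ ≥ 0 be a convex function on [0,b) with 0 < b ≤ ∞ and ψ(0) = 0, and let ψ*(t) = sup_{λ∈(0,b)} (λt − ψ(λ)) and ψ*⁻¹(y) = inf{t ≥ 0 : ψ*(t) > y}. If Z₁,…,Zₙ are real random variables with ln E[e^{λ Zᵢ}] ≤ ψ(λ) for all λ ∈ [0,b) and all i, then E[maxᵢ Zᵢ] ≤ ψ*⁻¹(ln n). -/
/-
For every admissible `λ`, Jensen's inequality and a union bound on the maximum give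
`e^{λ E[max Zᵢ]} ≤ E[e^{λ max Zᵢ}] ≤ ∑ᵢ E[e^{λ Zᵢ}] ≤ n e^{ψ(λ)}`, i.e. `λ E[max Zᵢ] - ψ(λ) ≤ ln n`.
So any `t` with `ψ*(t) > ln n` is larger than `E[max Zᵢ]`, and `E[max Zᵢ] ≤ ψ*⁻¹(ln n)`.
-/

open MeasureTheory Real Set ENNReal

/-- The convex conjugate `ψ*(t) = sup_{λ ∈ (0,b)} (λt - ψ(λ))`, as an extended real. -/
noncomputable def psiStar (b : ℝ≥0∞) (ψ : ℝ → ℝ) (t : ℝ) : EReal :=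
  ⨆ (l : ℝ) (_ : 0 < l) (_ : ENNReal.ofReal l < b), ((l * t - ψ l : ℝ) : EReal)

/-- The generalized inverse `ψ*⁻¹(y) = inf {t ≥ 0 : ψ*(t) > y}`. -/
noncomputable def psiStarInv (b : ℝ≥0∞) (ψ : ℝ → ℝ) (y : ℝ) : ℝ :=
  sInf {t : ℝ | 0 ≤ t ∧ (y : EReal) < psiStar b ψ t}

open ProbabilityTheory

lemma psiStarInv_nonneg (b : ℝ≥0∞) (ψ : ℝ → ℝ) (y : ℝ) : 0 ≤ psiStarInv b ψ y :=
  Real.sInf_nonneg fun _ ht => ht.1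

lemma coe_lt_psiStar {b : ℝ≥0∞} {ψ : ℝ → ℝ} {t y l : ℝ} (hl : 0 < l)
    (hlb : ENNReal.ofReal l < b) (h : y < l * t - ψ l) : (y : EReal) < psiStar b ψ t :=
  (EReal.coe_lt_coe_iff.mpr h).trans_le <| le_iSup₂_of_le l hl <| le_iSup_of_le hlb le_rfl

lemma exists_lt_of_coe_lt_psiStar {b : ℝ≥0∞} {ψ : ℝ → ℝ} {t y : ℝ}
    (h : (y : EReal) < psiStar b ψ t) :
    ∃ l, 0 < l ∧ ENNReal.ofReal l < b ∧ y < l * t - ψ l := by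
  obtain ⟨l, hl⟩ := lt_iSup_iff.mp h
  obtain ⟨hl0, hl⟩ := lt_iSup_iff.mp hl
  obtain ⟨hlb, hl⟩ := lt_iSup_iff.mp hl
  exact ⟨l, hl0, hlb, EReal.coe_lt_coe_iff.mp hl⟩

lemma le_psiStarInv {b : ℝ≥0∞} {ψ : ℝ → ℝ} {y M : ℝ} (hb : 0 < b)
    (hM : ∀ l, 0 < l → ENNReal.ofReal l < b → l * M - ψ l ≤ y) : M ≤ psiStarInv b ψ y := by
  obtain ⟨l₀, -, hl₀, hl₀b⟩ := ENNReal.lt_iff_exists_real_btwn.mp hb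
  rw [ENNReal.ofReal_pos] at hl₀
  have hne : {t : ℝ | 0 ≤ t ∧ (y : EReal) < psiStar b ψ t}.Nonempty := by
    have ht : l₀ * ((y + ψ l₀ + 1) / l₀) = y + ψ l₀ + 1 := by field_simp
    set t := (y + ψ l₀ + 1) / l₀
    refine ⟨max 0 t, le_max_left _ _, coe_lt_psiStar hl₀ hl₀b ?_⟩
    nlinarith [le_max_right 0 t]
  refine le_csInf hne fun s ⟨_, hs⟩ => ?_
  obtain ⟨l, hl, hlb, hlt⟩ := exists_lt_of_coe_lt_psiStar hs
  have := hM l hl hlb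
  exact le_of_mul_le_mul_left (by linarith) hl

lemma exp_mul_integral_le_mgf {Ω : Type*} [MeasurableSpace Ω] {μ : Measure Ω}
    [IsProbabilityMeasure μ] {X : Ω → ℝ} {t : ℝ} (hX : Integrable X μ)
    (hexp : Integrable (fun ω => exp (t * X ω)) μ) : exp (t * ∫ ω, X ω ∂μ) ≤ mgf X μ t := by
  rw [← integral_const_mul]
  exact convexOn_exp.map_integral_le continuousOn_exp isClosed_univ (ae_of_all _ fun _ => trivial)
    (hX.const_mul t) hexp

section Maximum

variable {Ω ι : Type*} [MeasurableSpace Ω] {μ : Measure Ω} {s : Finset ι} (hs : s.Nonempty)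
  {X : ι → Ω → ℝ} {t : ℝ}

lemma exp_mul_sup'_le_sum (f : ι → ℝ) (t : ℝ) :
    exp (t * s.sup' hs f) ≤ ∑ i ∈ s, exp (t * f i) := by
  obtain ⟨j, hj, hjmax⟩ := Finset.exists_mem_eq_sup' hs f
  rw [hjmax]
  exact Finset.single_le_sum (f := fun i => exp (t * f i)) (fun i _ => (exp_pos _).le) hj

lemma integrable_exp_mul_sup' (hmeas : AEStronglyMeasurable (fun ω => s.sup' hs (X · ω)) μ)
    (hexp : ∀ i ∈ s, Integrable (fun ω => exp (t * X i ω)) μ) :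
    Integrable (fun ω => exp (t * s.sup' hs (X · ω))) μ := by
  refine (integrable_finsetSum s hexp).mono'
    (continuous_exp.comp_aestronglyMeasurable (hmeas.const_mul t)) (ae_of_all _ fun ω => ?_)
  rw [norm_of_nonneg (exp_pos _).le]
  exact exp_mul_sup'_le_sum hs _ t

lemma mgf_sup'_le_sum (hexp : ∀ i ∈ s, Integrable (fun ω => exp (t * X i ω)) μ) :
    mgf (fun ω => s.sup' hs (X · ω)) μ t ≤ ∑ i ∈ s, mgf (X i) μ t := by
  simp only [mgf]
  rw [← integral_finsetSum s hexp]
  exact integral_mono_of_nonneg (ae_of_all _ fun _ => (exp_pos _).le)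
    (integrable_finsetSum s hexp) (ae_of_all _ fun ω => exp_mul_sup'_le_sum hs _ t)

theorem mul_integral_sup'_le_log_card_add [IsProbabilityMeasure μ] {c : ℝ}
    (hmax : Integrable (fun ω => s.sup' hs (X · ω)) μ)
    (hexp : ∀ i ∈ s, Integrable (fun ω => exp (t * X i ω)) μ)
    (hcgf : ∀ i ∈ s, cgf (X i) μ t ≤ c) :
    t * ∫ ω, s.sup' hs (X · ω) ∂μ ≤ Real.log s.card + c := by
  have hcard : (0 : ℝ) < s.card := by exact_mod_cast hs.card_pos
  have hmgf : ∀ i ∈ s, mgf (X i) μ t ≤ exp c := fun i hi =>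
    (log_le_iff_le_exp (mgf_pos (hexp i hi))).mp (hcgf i hi)
  rw [← log_exp c, ← log_mul hcard.ne' (exp_pos c).ne', le_log_iff_exp_le (by positivity)]
  calc exp (t * ∫ ω, s.sup' hs (X · ω) ∂μ)
      ≤ mgf (fun ω => s.sup' hs (X · ω)) μ t :=
        exp_mul_integral_le_mgf hmax (integrable_exp_mul_sup' hs hmax.1 hexp)
    _ ≤ ∑ i ∈ s, mgf (X i) μ t := mgf_sup'_le_sum hs hexp
    _ ≤ ∑ _i ∈ s, exp c := Finset.sum_le_sum hmgf
    _ = s.card * exp c := by rw [Finset.sum_const, nsmul_eq_mul]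

end Maximum

theorem stmt0_general {Ω : Type*} [MeasurableSpace Ω] (μ : Measure Ω) [IsProbabilityMeasure μ]
    (n : ℕ) (hn : 0 < n) (Z : Fin n → Ω → ℝ)
    (b : ℝ≥0∞) (hb : 0 < b) (ψ : ℝ → ℝ)
    (hmgf : ∀ i, ∀ l : ℝ, 0 ≤ l → ENNReal.ofReal l < b →
      Integrable (fun ω => Real.exp (l * Z i ω)) μ ∧
      Real.log (∫ ω, Real.exp (l * Z i ω) ∂μ) ≤ ψ l) :
    ∫ ω, (Finset.univ.sup' (Finset.univ_nonempty_iff.mpr (Fin.pos_iff_nonempty.mp hn))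
        fun i => Z i ω) ∂μ ≤ psiStarInv b ψ (Real.log n) := by
  generalize_proofs hne
  by_cases hmax : Integrable (fun ω => Finset.univ.sup' hne fun i => Z i ω) μ
  · refine le_psiStarInv hb fun l hl hlb => ?_
    have := mul_integral_sup'_le_log_card_add (c := ψ l) hne hmax
      (fun i _ => (hmgf i l hl.le hlb).1) (fun i _ => (hmgf i l hl.le hlb).2)
    rw [Finset.card_univ, Fintype.card_fin] at this
    linarith
  · -- a non-integrable maximum has Bochner integral `0`
    rw [integral_undef hmax]
    exact psiStarInv_nonneg b ψ _

/-- Maximal inequality: if `ψ ≥ 0` is convex on `[0,b)` (`0 < b ≤ ∞`) with `ψ(0) = 0`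
and `ln E[e^{λ Zᵢ}] ≤ ψ(λ)` for all `λ ∈ [0,b)` and all `i`, then
`E[maxᵢ Zᵢ] ≤ ψ*⁻¹(ln n)`. -/
theorem stmt0 {Ω : Type*} [MeasurableSpace Ω] (μ : Measure Ω) [IsProbabilityMeasure μ]
    (n : ℕ) (hn : 0 < n) (Z : Fin n → Ω → ℝ)
    (hZm : ∀ i, Measurable (Z i)) (hZint : ∀ i, Integrable (Z i) μ)
    (b : ℝ≥0∞) (hb : 0 < b) (ψ : ℝ → ℝ) (hψ0 : ψ 0 = 0)
    (hψnn : ∀ x : ℝ, 0 ≤ x → ENNReal.ofReal x < b → 0 ≤ ψ x)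
    (hψconv : ConvexOn ℝ {x : ℝ | 0 ≤ x ∧ ENNReal.ofReal x < b} ψ)
    (hmgf : ∀ i, ∀ l : ℝ, 0 ≤ l → ENNReal.ofReal l < b →
      Integrable (fun ω => Real.exp (l * Z i ω)) μ ∧
      Real.log (∫ ω, Real.exp (l * Z i ω) ∂μ) ≤ ψ l) :
    ∫ ω, (Finset.univ.sup' (Finset.univ_nonempty_iff.mpr (Fin.pos_iff_nonempty.mp hn))
        fun i => Z i ω) ∂μ ≤ psiStarInv b ψ (Real.log n) :=
  stmt0_general μ n hn Z b hb ψ hmgf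
end

section
/- For a convex nonnegative function ψ on [0,b) with ψ(0)=0 and convex conjugate ψ*(t) = sup_{λ∈(0,b)}(λt − ψ(λ)), the generalized inverse satisfies ψ*⁻¹(y) = inf_{λ∈(0,b)} (y + ψ(λ))/λ for every y ≥ 0, where ψ*⁻¹(y) = inf{t ≥ 0 : ψ*(t) > y}. -/
open Real Set ENNReal

/-- For a convex nonnegative `ψ` on `[0,b)` with `ψ(0)=0`, the generalized inverse
of the conjugate satisfies `ψ*⁻¹(y) = inf_{λ ∈ (0,b)} (y + ψ(λ))/λ` for every `y ≥ 0`. -/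
theorem stmt2 (b : ℝ≥0∞) (hb : 0 < b) (ψ : ℝ → ℝ) (hψ0 : ψ 0 = 0)
    (hψnn : ∀ x : ℝ, 0 ≤ x → ENNReal.ofReal x < b → 0 ≤ ψ x)
    (hψconv : ConvexOn ℝ {x : ℝ | 0 ≤ x ∧ ENNReal.ofReal x < b} ψ)
    (y : ℝ) (hy : 0 ≤ y) :
    sInf {t : ℝ | 0 ≤ t ∧ (y : EReal) < psiStar b ψ t} =
      sInf {r : ℝ | ∃ l : ℝ, 0 < l ∧ ENNReal.ofReal l < b ∧ r = (y + ψ l) / l} := by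
  set T : Set ℝ := {r : ℝ | ∃ l : ℝ, 0 < l ∧ ENNReal.ofReal l < b ∧ r = (y + ψ l) / l} with hT
  obtain ⟨l0, hl0, hl0b⟩ : ∃ l : ℝ, 0 < l ∧ ENNReal.ofReal l < b := by
    rcases eq_or_ne b ⊤ with rfl | hbt
    · exact ⟨1, one_pos, by simp⟩
    · have hbt' : 0 < b.toReal := ENNReal.toReal_pos hb.ne' hbt
      refine ⟨b.toReal / 2, by positivity, ?_⟩
      rw [ENNReal.ofReal_lt_iff_lt_toReal (by positivity) hbt]
      linarith
  have hTne : T.Nonempty := ⟨(y + ψ l0) / l0, l0, hl0, hl0b, rfl⟩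
  have hTlb : ∀ r ∈ T, 0 ≤ r := by
    rintro r ⟨l, hl, hlb, rfl⟩
    exact div_nonneg (by linarith [hψnn l hl.le hlb]) hl.le
  have hm0 : 0 ≤ sInf T := le_csInf hTne hTlb
  have hset : {t : ℝ | 0 ≤ t ∧ (y : EReal) < psiStar b ψ t} = Ioi (sInf T) := by
    ext t
    simp only [mem_setOf_eq, mem_Ioi, psiStar, lt_iSup_iff, EReal.coe_lt_coe_iff]
    constructor
    · rintro ⟨ht, l, hl, hlb, hlt⟩
      have h1 : (y + ψ l) / l < t := by
        rw [div_lt_iff₀ hl]; nlinarith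
      exact lt_of_le_of_lt (csInf_le ⟨0, hTlb⟩ ⟨l, hl, hlb, rfl⟩) h1
    · intro ht
      obtain ⟨r, ⟨l, hl, hlb, rfl⟩, hrt⟩ := exists_lt_of_csInf_lt hTne ht
      have h0 : 0 ≤ (y + ψ l) / l := hTlb _ ⟨l, hl, hlb, rfl⟩
      refine ⟨le_trans h0 hrt.le, l, hl, hlb, ?_⟩
      rw [div_lt_iff₀ hl] at hrt; nlinarith
  rw [hset, csInf_Ioi]
end

section
/- Let ψ be an Orlicz function with convex conjugate ψ*, and define the Amemiya norm ‖X‖_{ψ*}^A = inf_{t>0} (1 + E[ψ*(t|X|)])/t. Then inf_{t>0} (n + ψ*(t))/t = ψ⁻¹(n) for every positive integer n, where ψ⁻¹(y) = inf{s ≥ 0 : ψ(s) > y}. -/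
open MeasureTheory Set ENNReal

/-- `ψ` is an Orlicz function. -/
def IsOrlicz (ψ : ℝ → ℝ≥0∞) : Prop :=
  ψ 0 = 0 ∧
  (∀ u ∈ Set.Ici (0:ℝ), ∀ v ∈ Set.Ici (0:ℝ), ∀ c d : ℝ, 0 ≤ c → 0 ≤ d → c + d = 1 →
    ψ (c * u + d * v) ≤ ENNReal.ofReal c * ψ u + ENNReal.ofReal d * ψ v) ∧
  (∃ x : ℝ, 0 < x ∧ ψ x ≠ 0) ∧ (∃ x : ℝ, 0 < x ∧ ψ x ≠ ∞)

/-- The convex conjugate `ψ*(u) = sup_{v ≥ 0} (uv - ψ(v))`. -/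
noncomputable def orliczConj (ψ : ℝ → ℝ≥0∞) (u : ℝ) : ℝ≥0∞ :=
  ⨆ (v : ℝ) (_ : 0 ≤ v), (ENNReal.ofReal (u * v) - ψ v)

/-! Write `a = ψ⁻¹(y)`. Since `ψ ≤ y` on `[0, a)`, Young's inequality `t v ≤ ψ v + ψ*(t)` gives
`t a ≤ y + ψ*(t)` for every `t > 0`. Conversely, for `c > a` the level `y` is exceeded on `(a, c)`,
and convexity produces a line `v ↦ y + t (v - c)` with `t > 0` lying below `ψ` on `[0, ∞)`: if `ψ`
is infinite at some `b ∈ (a, c)` any slope with `t (c - b) ≥ y` works, otherwise the slope of a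
secant of `ψ` over two points of `(a, c)` does. Such a line means `ψ*(t) ≤ c t - y`, i.e.
`(y + ψ*(t)) / t ≤ c`. -/

open scoped NNReal

namespace IsOrlicz

variable {ψ : ℝ → ℝ≥0∞}

theorem apply_mul_le (hψ : IsOrlicz ψ) {c u : ℝ} (hc₀ : 0 ≤ c) (hc₁ : c ≤ 1) (hu : 0 ≤ u) :
    ψ (c * u) ≤ ENNReal.ofReal c * ψ u := by
  simpa [hψ.1] using hψ.2.1 u hu 0 self_mem_Ici c (1 - c) hc₀ (by linarith) (by ring)

theorem monotoneOn (hψ : IsOrlicz ψ) : MonotoneOn ψ (Ici 0) := by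
  intro u hu v hv huv
  rcases (mem_Ici.mp hv).eq_or_lt' with rfl | hv
  · rw [le_antisymm huv (mem_Ici.mp hu)]
  calc ψ u = ψ (u / v * v) := by rw [div_mul_cancel₀ u hv.ne']
    _ ≤ ENNReal.ofReal (u / v) * ψ v :=
      hψ.apply_mul_le (div_nonneg hu hv.le) (div_le_one_of_le₀ huv hv.le) hv.le
    _ ≤ ψ v := mul_le_of_le_one_left' (ENNReal.ofReal_le_one.mpr (div_le_one_of_le₀ huv hv.le))

theorem ofReal_mul_apply_le (hψ : IsOrlicz ψ) {c u : ℝ} (hc : 1 ≤ c) (hu : 0 ≤ u) :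
    ENNReal.ofReal c * ψ u ≤ ψ (c * u) := by
  have hc₀ : 0 < c := one_pos.trans_le hc
  have h := hψ.apply_mul_le (inv_nonneg.mpr hc₀.le) (inv_le_one_of_one_le₀ hc)
    (mul_nonneg hc₀.le hu)
  rw [inv_mul_cancel_left₀ hc₀.ne'] at h
  calc ENNReal.ofReal c * ψ u ≤ ENNReal.ofReal c * (ENNReal.ofReal c⁻¹ * ψ (c * u)) := by gcongr
    _ = ψ (c * u) := by
      rw [← mul_assoc, ← ENNReal.ofReal_mul hc₀.le, mul_inv_cancel₀ hc₀.ne', ENNReal.ofReal_one,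
        one_mul]

theorem exists_lt_apply (hψ : IsOrlicz ψ) {y : ℝ≥0∞} (hy : y ≠ ∞) : ∃ s, 0 ≤ s ∧ y < ψ s := by
  obtain ⟨x, hx, hψx⟩ := hψ.2.2.1
  obtain ⟨k, hk⟩ := ENNReal.exists_nat_mul_gt hψx hy
  have hk₁ : (1 : ℝ) ≤ k := by
    rcases k with _ | k
    · simp at hk
    · exact_mod_cast Nat.le_add_left 1 k
  refine ⟨k * x, by positivity, hk.trans_le ?_⟩
  simpa using hψ.ofReal_mul_apply_le hk₁ hx.le

theorem convexOn_toReal (hψ : IsOrlicz ψ) {b : ℝ} (hb : ψ b ≠ ∞) :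
    ConvexOn ℝ (Icc 0 b) (fun x ↦ (ψ x).toReal) := by
  have hfin : ∀ x ∈ Icc 0 b, ψ x ≠ ∞ := fun x hx ↦
    ne_top_of_le_ne_top hb (hψ.monotoneOn hx.1 (hx.1.trans hx.2) hx.2)
  refine ⟨convex_Icc 0 b, fun u hu v hv c d hc hd hcd ↦ ?_⟩
  have h := hψ.2.1 u hu.1 v hv.1 c d hc hd hcd
  rw [← ENNReal.ofReal_toReal (hfin u hu), ← ENNReal.ofReal_toReal (hfin v hv),
    ← ENNReal.ofReal_mul hc, ← ENNReal.ofReal_mul hd,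
    ← ENNReal.ofReal_add (by positivity) (by positivity)] at h
  simpa using ENNReal.toReal_le_of_le_ofReal (by positivity) h

end IsOrlicz

theorem ofReal_mul_le_add_orliczConj (ψ : ℝ → ℝ≥0∞) {t v : ℝ} (hv : 0 ≤ v) :
    ENNReal.ofReal (t * v) ≤ ψ v + orliczConj ψ t :=
  le_add_tsub.trans <| add_le_add_right
    (le_iSup₂ (f := fun v (_ : 0 ≤ v) ↦ ENNReal.ofReal (t * v) - ψ v) v hv) _

theorem orliczConj_le_ofReal {ψ : ℝ → ℝ≥0∞} {t M : ℝ}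
    (h : ∀ v, 0 ≤ v → ψ v ≠ ∞ → t * v - (ψ v).toReal ≤ M) : orliczConj ψ t ≤ ENNReal.ofReal M := by
  refine iSup₂_le fun v hv ↦ ?_
  rcases eq_or_ne (ψ v) ∞ with hψv | hψv
  · simp [hψv]
  rw [← ENNReal.ofReal_toReal hψv, ← ENNReal.ofReal_sub _ ENNReal.toReal_nonneg]
  exact ENNReal.ofReal_le_ofReal (h v hv hψv)

noncomputable def orliczInv (ψ : ℝ → ℝ≥0∞) (y : ℝ≥0∞) : ℝ :=
  sInf {s : ℝ | 0 ≤ s ∧ y < ψ s}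

section orliczInv

variable {ψ : ℝ → ℝ≥0∞} {y : ℝ≥0∞}

theorem orliczInv_nonneg : 0 ≤ orliczInv ψ y :=
  Real.sInf_nonneg fun _ hs ↦ hs.1

theorem apply_le_of_lt_orliczInv {v : ℝ} (hv : 0 ≤ v) (hvy : v < orliczInv ψ y) : ψ v ≤ y :=
  not_lt.mp fun hy ↦
    (csInf_le ⟨0, fun _ hs ↦ hs.1⟩ (show v ∈ {s | 0 ≤ s ∧ y < ψ s} from ⟨hv, hy⟩)).not_gt hvy

theorem IsOrlicz.lt_apply_of_orliczInv_lt (hψ : IsOrlicz ψ) (hy : y ≠ ∞) {b : ℝ}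
    (hb : orliczInv ψ y < b) : y < ψ b := by
  obtain ⟨s, hs, hsb⟩ := exists_lt_of_csInf_lt (hψ.exists_lt_apply hy) hb
  exact hs.2.trans_le (hψ.monotoneOn hs.1 (hs.1.trans hsb.le) hsb.le)

theorem ofReal_orliczInv_le {t : ℝ} (ht : 0 < t) :
    ENNReal.ofReal (orliczInv ψ y) ≤ (y + orliczConj ψ t) / ENNReal.ofReal t := by
  refine le_of_forall_lt_imp_le_of_dense fun c hc ↦ ?_
  have hv := ENNReal.toReal_lt_of_lt_ofReal hc
  rw [← ENNReal.ofReal_toReal hc.ne_top, ENNReal.le_div_iff_mul_le (by simp [ht]) (by simp),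
    ← ENNReal.ofReal_mul ENNReal.toReal_nonneg, mul_comm]
  exact (ofReal_mul_le_add_orliczConj ψ ENNReal.toReal_nonneg).trans
    (add_le_add_left (apply_le_of_lt_orliczInv ENNReal.toReal_nonneg hv) _)

end orliczInv

namespace IsOrlicz

variable {ψ : ℝ → ℝ≥0∞}

theorem secant_le_toReal (hψ : IsOrlicz ψ) {b₁ b₂ v : ℝ} (hb₁ : 0 ≤ b₁) (hb : b₁ < b₂)
    (hv : 0 ≤ v) (hout : v ≤ b₁ ∨ b₂ ≤ v) (hψb₂ : ψ b₂ ≠ ∞) (hψv : ψ v ≠ ∞) :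
    (ψ b₁).toReal + ((ψ b₂).toReal - (ψ b₁).toReal) / (b₂ - b₁) * (v - b₁) ≤ (ψ v).toReal := by
  have hconv := hψ.convexOn_toReal (b := max b₂ v) <| by
    rcases max_choice b₂ v with h | h <;> rwa [h]
  have mem : ∀ x, 0 ≤ x → x ≤ b₂ ∨ x ≤ v → x ∈ Icc 0 (max b₂ v) := fun x hx h ↦
    ⟨hx, le_max_iff.mpr h⟩
  have hb₁m := mem b₁ hb₁ (Or.inl hb.le)
  have hb₂m := mem b₂ (hb₁.trans hb.le) (Or.inl le_rfl)
  have hvm := mem v hv (Or.inr le_rfl)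
  rcases hout with hvb₁ | hb₂v
  · rcases hvb₁.eq_or_lt with rfl | hvb₁
    · simp
    have h := hconv.secant_mono hb₁m hvm hb₂m hvb₁.ne hb.ne' (hvb₁.trans hb).le
    rw [div_le_iff_of_neg (sub_neg.mpr hvb₁)] at h
    linarith
  · have h := hconv.secant_mono hb₁m hb₂m hvm hb.ne' (hb.trans_le hb₂v).ne' hb₂v
    rw [le_div_iff₀ (sub_pos.mpr (hb.trans_le hb₂v))] at h
    linarith

theorem exists_slope_of_apply_eq_top (hψ : IsOrlicz ψ) (y : ℝ≥0) {b c : ℝ} (hb : 0 ≤ b)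
    (hbc : b < c) (hψb : ψ b = ∞) :
    ∃ t > 0, (y : ℝ) ≤ c * t ∧ ∀ v, 0 ≤ v → ψ v ≠ ∞ → t * v - (ψ v).toReal ≤ c * t - y := by
  have hcb : 0 < c - b := sub_pos.mpr hbc
  set t := ((y : ℝ) + 1) / (c - b)
  have ht : 0 < t := by positivity
  have htcb : t * (c - b) = y + 1 := div_mul_cancel₀ _ hcb.ne'
  refine ⟨t, ht, by nlinarith, fun v hv hψv ↦ ?_⟩
  have hvb : v < b := lt_of_not_ge fun hbv ↦
    hψv (eq_top_mono (hψ.monotoneOn hb (hb.trans hbv) hbv) hψb)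
  nlinarith [ENNReal.toReal_nonneg (a := ψ v)]

theorem exists_slope_of_ne_top (hψ : IsOrlicz ψ) {y : ℝ≥0} {b₁ b₂ c : ℝ} (hb₁ : 0 ≤ b₁)
    (hb : b₁ < b₂) (hb₂c : b₂ < c) (hyb₁ : (y : ℝ≥0∞) < ψ b₁) (hψb₂ : ψ b₂ ≠ ∞) :
    ∃ t > 0, (y : ℝ) ≤ c * t ∧ ∀ v, 0 ≤ v → ψ v ≠ ∞ → t * v - (ψ v).toReal ≤ c * t - y := by
  have hmono : ∀ {u v}, 0 ≤ u → u ≤ v → ψ u ≤ ψ v := fun hu huv ↦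
    hψ.monotoneOn hu (hu.trans huv) huv
  have hψb₁ : ψ b₁ ≠ ∞ := ne_top_of_le_ne_top hψb₂ (hmono hb₁ hb.le)
  set P := (ψ b₁).toReal
  set t := ((ψ b₂).toReal - P) / (b₂ - b₁)
  have hyP : (y : ℝ) < P := by
    simpa using (ENNReal.toReal_lt_toReal ENNReal.coe_ne_top hψb₁).mpr hyb₁
  have hPt : P ≤ t * b₁ := by
    have h := hψ.secant_le_toReal hb₁ hb le_rfl (Or.inl hb₁) hψb₂ (by simp [hψ.1])
    simp only [hψ.1, ENNReal.toReal_zero] at h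
    linarith
  have ht : 0 < t := by nlinarith [y.coe_nonneg]
  have htc : t * b₁ ≤ t * c := by gcongr; linarith
  refine ⟨t, ht, by linarith, fun v hv hψv ↦ ?_⟩
  by_cases hout : v ≤ b₁ ∨ b₂ ≤ v
  · have h := hψ.secant_le_toReal hb₁ hb hv hout hψb₂ hψv
    linarith
  · push Not at hout
    have hPv : P ≤ (ψ v).toReal := ENNReal.toReal_mono hψv (hmono hb₁ hout.1.le)
    have htv : t * v ≤ t * c := by gcongr; linarith
    linarith

theorem exists_div_le (hψ : IsOrlicz ψ) {y : ℝ≥0} {a c : ℝ} (ha : 0 ≤ a) (hac : a < c)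
    (hy : ∀ b, a < b → (y : ℝ≥0∞) < ψ b) :
    ∃ t > 0, ((y : ℝ≥0∞) + orliczConj ψ t) / ENNReal.ofReal t ≤ ENNReal.ofReal c := by
  suffices ∃ t > 0, (y : ℝ) ≤ c * t ∧
      ∀ v, 0 ≤ v → ψ v ≠ ∞ → t * v - (ψ v).toReal ≤ c * t - y by
    obtain ⟨t, ht, hyt, hslope⟩ := this
    refine ⟨t, ht, ENNReal.div_le_of_le_mul ?_⟩
    calc (y : ℝ≥0∞) + orliczConj ψ t ≤ ENNReal.ofReal y + ENNReal.ofReal (c * t - y) := by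
          rw [ENNReal.ofReal_coe_nnreal]
          exact add_le_add_right (orliczConj_le_ofReal hslope) _
      _ = ENNReal.ofReal c * ENNReal.ofReal t := by
          rw [← ENNReal.ofReal_add y.coe_nonneg (by linarith),
            ← ENNReal.ofReal_mul (ha.trans hac.le)]
          ring_nf
  by_cases htop : ∃ b ∈ Ioo a c, ψ b = ∞
  · obtain ⟨b, ⟨hab, hbc⟩, hψb⟩ := htop
    exact hψ.exists_slope_of_apply_eq_top y (ha.trans hab.le) hbc hψb
  · push Not at htop
    exact hψ.exists_slope_of_ne_top (b₁ := (2 * a + c) / 3) (b₂ := (a + 2 * c) / 3)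
      (by linarith) (by linarith) (by linarith) (hy _ (by linarith))
      (htop _ ⟨by linarith, by linarith⟩)

theorem iInf_add_orliczConj_div_eq (hψ : IsOrlicz ψ) (y : ℝ≥0) :
    ⨅ (t : ℝ) (_ : 0 < t), ((y : ℝ≥0∞) + orliczConj ψ t) / ENNReal.ofReal t =
      ENNReal.ofReal (orliczInv ψ y) := by
  refine le_antisymm ?_ (le_iInf₂ fun t ht ↦ ofReal_orliczInv_le ht)
  refine le_of_forall_gt_imp_ge_of_dense fun c hc ↦ ?_
  rcases eq_or_ne c ∞ with rfl | hc_top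
  · exact le_top
  obtain ⟨t, ht, hle⟩ := hψ.exists_div_le orliczInv_nonneg
    ((ENNReal.ofReal_lt_iff_lt_toReal orliczInv_nonneg hc_top).mp hc)
    fun b hb ↦ hψ.lt_apply_of_orliczInv_lt ENNReal.coe_ne_top hb
  exact iInf₂_le_of_le t ht (hle.trans (ENNReal.ofReal_toReal hc_top).le)

end IsOrlicz

theorem stmt9_general (ψ : ℝ → ℝ≥0∞) (hψ : IsOrlicz ψ) (n : ℕ) :
    (⨅ (t : ℝ) (_ : 0 < t), ((n : ℝ≥0∞) + orliczConj ψ t) / ENNReal.ofReal t) =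
      ENNReal.ofReal (sInf {s : ℝ | 0 ≤ s ∧ (n : ℝ≥0∞) < ψ s}) := by
  simpa [orliczInv] using hψ.iInf_add_orliczConj_div_eq n

/-- `inf_{t>0} (n + ψ*(t))/t = ψ⁻¹(n)` where `ψ⁻¹(y) = inf {s ≥ 0 : ψ(s) > y}`. -/
theorem stmt9 (ψ : ℝ → ℝ≥0∞) (hψ : IsOrlicz ψ) (n : ℕ) (hn : 0 < n) :
    (⨅ (t : ℝ) (_ : 0 < t), ((n : ℝ≥0∞) + orliczConj ψ t) / ENNReal.ofReal t) =
      ENNReal.ofReal (sInf {s : ℝ | 0 ≤ s ∧ (n : ℝ≥0∞) < ψ s}) :=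
  stmt9_general ψ hψ n
end

section
/- Let T ∈ {1,…,n} and Z = (Z₁,…,Zₙ) be jointly distributed with E[Zᵢ] = 0 and ‖Zᵢ‖_p ≤ σ for all i, where p ≥ 1 and 1/p + 1/q = 1. Then |E[Z_T]| ≤ σ · n^{1/p} · (Σᵢ inf_{aᵢ∈ℝ} E|P_{T|Z}(i|Z) − aᵢ|^q)^{1/q}. -/
open MeasureTheory Set ENNReal

/-!
Write `Z_T = ∑ᵢ Zᵢ 1{T = i}`. Since `Zᵢ` is `σ(Z)`-measurable, the tower property turns
`E[Zᵢ 1{T = i}]` into `E[Zᵢ Wᵢ]` with `Wᵢ = P(T = i | Z)`, and since `E[Zᵢ] = 0` this equals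
`E[Zᵢ (Wᵢ - aᵢ)]` for every constant `aᵢ`. Hölder's inequality bounds it by `σ ‖Wᵢ - aᵢ‖_q`;
optimising over `aᵢ` and applying Hölder's inequality once more to the sum over `i` (or, when
`q = ∞`, bounding the sum by `n` times its largest term) gives the claim.
-/

section

variable {Ω : Type*} {m m0 : MeasurableSpace Ω} {μ : Measure Ω}

lemma enorm_integral_mul_le_eLpNorm_mul_iInf_eLpNorm_sub_const {p q : ℝ≥0∞}
    [p.HolderTriple q 1] {f w : Ω → ℝ} (hf : Integrable f μ) (hf0 : ∫ ω, f ω ∂μ = 0)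
    (hfp : eLpNorm f p μ ≠ ∞) (hfw : Integrable (fun ω => f ω * w ω) μ)
    (hw : AEStronglyMeasurable w μ) :
    ‖∫ ω, f ω * w ω ∂μ‖ₑ ≤ eLpNorm f p μ * ⨅ a : ℝ, eLpNorm (fun ω => w ω - a) q μ := by
  rw [ENNReal.mul_iInf fun h => absurd h hfp]
  refine le_iInf fun a => ?_
  have hcenter : ∫ ω, f ω * w ω ∂μ = ∫ ω, f ω * (w ω - a) ∂μ := by
    simp only [mul_sub]
    rw [integral_sub hfw (hf.mul_const a), integral_mul_const, hf0, zero_mul, sub_zero]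
  calc ‖∫ ω, f ω * w ω ∂μ‖ₑ ≤ eLpNorm (fun ω => f ω * (w ω - a)) 1 μ := by
        rw [hcenter, eLpNorm_one_eq_lintegral_enorm]
        exact enorm_integral_le_lintegral_enorm _
    _ ≤ eLpNorm f p μ * eLpNorm (fun ω => w ω - a) q μ :=
        eLpNorm_smul_le_mul_eLpNorm (φ := f) (r := 1) (hw.sub aestronglyMeasurable_const) hf.1

lemma integral_mul_condExp_of_stronglyMeasurable (hm : m ≤ m0) [SigmaFinite (μ.trim hm)]
    {f g : Ω → ℝ} (hf : StronglyMeasurable[m] f) (hfg : Integrable (f * g) μ)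
    (hg : Integrable g μ) :
    ∫ ω, f ω * μ[g | m] ω ∂μ = ∫ ω, f ω * g ω ∂μ :=
  calc ∫ ω, f ω * μ[g | m] ω ∂μ = ∫ ω, μ[f * g | m] ω ∂μ :=
        integral_congr_ae (condExp_mul_of_stronglyMeasurable_left hf hfg hg).symm
    _ = ∫ ω, f ω * g ω ∂μ := integral_condExp hm

lemma enorm_integral_mul_le_eLpNorm_mul_iInf_eLpNorm_condExp_sub_const [IsFiniteMeasure μ]
    (hm : m ≤ m0) {p q : ℝ≥0∞} [p.HolderTriple q 1] {f g : Ω → ℝ}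
    (hfm : StronglyMeasurable[m] f) (hf : Integrable f μ) (hf0 : ∫ ω, f ω ∂μ = 0)
    (hfp : eLpNorm f p μ ≠ ∞) (hg : Integrable g μ) {C : ℝ} (hgC : ∀ᵐ ω ∂μ, |g ω| ≤ C) :
    ‖∫ ω, f ω * g ω ∂μ‖ₑ ≤
      eLpNorm f p μ * ⨅ a : ℝ, eLpNorm (fun ω => μ[g | m] ω - a) q μ := by
  have hcondExp_bdd : ∀ᵐ ω ∂μ, ‖μ[g | m] ω‖ ≤ C := ae_bdd_abs_condExp_of_ae_bdd_abs hgC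
  have hcondExp_meas : AEStronglyMeasurable (μ[g | m]) μ := integrable_condExp.1
  rw [← integral_mul_condExp_of_stronglyMeasurable hm hfm (hf.mul_bdd hg.1 hgC) hg]
  exact enorm_integral_mul_le_eLpNorm_mul_iInf_eLpNorm_sub_const hf hf0 hfp
    (hf.mul_bdd hcondExp_meas hcondExp_bdd) hcondExp_meas

lemma integral_apply_eq_sum_integral_mul_ite {ι : Type*} [Fintype ι] [DecidableEq ι]
    {Z : ι → Ω → ℝ} {T : Ω → ι} (hT : ∀ i, MeasurableSet (T ⁻¹' {i}))
    (hZ : ∀ i, Integrable (Z i) μ) :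
    ∫ ω, Z (T ω) ω ∂μ = ∑ i, ∫ ω, Z i ω * (if T ω = i then 1 else 0) ∂μ := by
  have hZT : (fun ω => Z (T ω) ω) = fun ω => ∑ i, Z i ω * (if T ω = i then 1 else 0) := by
    ext ω
    simp
  rw [hZT]
  refine integral_finsetSum _ fun i _ => ?_
  have hindicator :
      (fun ω => Z i ω * (if T ω = i then 1 else 0)) = (T ⁻¹' {i}).indicator (Z i) := by
    ext ω
    by_cases h : T ω = i <;> simp [h]
  exact hindicator ▸ (hZ i).indicator (hT i)

lemma integrable_ite_eq_one [IsFiniteMeasure μ] {ι : Type*} [DecidableEq ι] {T : Ω → ι} {i : ι}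
    (hT : MeasurableSet (T ⁻¹' {i})) :
    Integrable (fun ω => if T ω = i then (1 : ℝ) else 0) μ := by
  have hindicator : (fun ω => if T ω = i then (1 : ℝ) else 0) = (T ⁻¹' {i}).indicator 1 := by
    ext ω
    by_cases h : T ω = i <;> simp [h]
  exact hindicator ▸ (integrable_const 1).indicator hT

lemma enorm_integral_apply_le_mul_sum_iInf_eLpNorm_condExp_sub_const [IsFiniteMeasure μ]
    (hm : m ≤ m0) {p q : ℝ≥0∞} [p.HolderTriple q 1] {ι : Type*} [Fintype ι] [DecidableEq ι]
    {Z : ι → Ω → ℝ} {T : Ω → ι} (hT : ∀ i, MeasurableSet (T ⁻¹' {i}))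
    (hZm : ∀ i, StronglyMeasurable[m] (Z i)) (hZ : ∀ i, Integrable (Z i) μ)
    (hmean : ∀ i, ∫ ω, Z i ω ∂μ = 0) {σ : ℝ≥0∞} (hσ : σ ≠ ∞)
    (hnorm : ∀ i, eLpNorm (Z i) p μ ≤ σ) :
    ‖∫ ω, Z (T ω) ω ∂μ‖ₑ ≤ σ * ∑ i, ⨅ a : ℝ,
      eLpNorm (fun ω => μ[fun ω' => if T ω' = i then (1 : ℝ) else 0 | m] ω - a) q μ := by
  rw [integral_apply_eq_sum_integral_mul_ite hT hZ, Finset.mul_sum]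
  refine (enorm_sum_le _ _).trans (Finset.sum_le_sum fun i _ => ?_)
  have hind_le : ∀ᵐ ω ∂μ, |if T ω = i then (1 : ℝ) else 0| ≤ 1 :=
    .of_forall fun ω => by split_ifs <;> simp
  refine (enorm_integral_mul_le_eLpNorm_mul_iInf_eLpNorm_condExp_sub_const (q := q) hm (hZm i)
    (hZ i) (hmean i) ((hnorm i).trans_lt hσ.lt_top).ne (integrable_ite_eq_one (hT i))
    hind_le).trans ?_
  gcongr
  exact hnorm i

lemma iInf_eLpNorm_rpow {ι E : Type*} [Nonempty ι] [NormedAddCommGroup E] (g : ι → Ω → E)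
    {q : ℝ} (hq : 0 < q) :
    (⨅ i, eLpNorm (g i) (.ofReal q) μ) ^ q = ⨅ i, ∫⁻ ω, ‖g i ω‖ₑ ^ q ∂μ := by
  rw [← ENNReal.orderIsoRpow_apply q hq, OrderIso.map_iInf]
  refine iInf_congr fun i => ?_
  rw [ENNReal.orderIsoRpow_apply, eLpNorm_eq_eLpNorm' (by simpa using hq) ofReal_ne_top,
    toReal_ofReal hq.le, ← lintegral_rpow_enorm_eq_rpow_eLpNorm' hq]

end

lemma ENNReal.sum_le_card_rpow_mul_sum_rpow {ι : Type*} (s : Finset ι) (x : ι → ℝ≥0∞)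
    {p q : ℝ} (hpq : p.HolderConjugate q) :
    ∑ i ∈ s, x i ≤ (s.card : ℝ≥0∞) ^ (1 / p) * (∑ i ∈ s, x i ^ q) ^ (1 / q) := by
  simpa using ENNReal.inner_le_Lp_mul_Lq s (fun _ => 1) x hpq

theorem stmt11_general {Ω : Type*} [MeasurableSpace Ω] (μ : Measure Ω) [IsProbabilityMeasure μ]
    (n : ℕ) (Z : Fin n → Ω → ℝ) (T : Ω → Fin n) (hT : Measurable T)
    (hZm : ∀ i, Measurable (Z i)) (hZint : ∀ i, Integrable (Z i) μ)
    (hmean : ∀ i, ∫ ω, Z i ω ∂μ = 0)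
    (p : ℝ) (σ : ℝ)
    (hnorm : ∀ i, eLpNorm (Z i) (ENNReal.ofReal p) μ ≤ ENNReal.ofReal σ) :
    -- the conditional probability `P(T = i | Z)` as a random variable
    ∀ W : Fin n → Ω → ℝ,
      (∀ i, W i = μ[(fun ω' => if T ω' = i then (1:ℝ) else 0) |
        MeasurableSpace.comap (fun ω' => fun j => Z j ω') MeasurableSpace.pi]) →
      -- case `1 < p` with conjugate exponent `q` finite
      (∀ q : ℝ, 1 < p → 1 / p + 1 / q = 1 →
        ENNReal.ofReal |∫ ω, Z (T ω) ω ∂μ| ≤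
          ENNReal.ofReal σ * (n : ℝ≥0∞) ^ (1 / p) *
            (∑ i : Fin n, ⨅ a : ℝ,
              ∫⁻ ω, ENNReal.ofReal |W i ω - a| ^ q ∂μ) ^ (1 / q)) ∧
      -- case `p = 1`, `q = ∞` with the `L^∞` norm
      (p = 1 →
        ENNReal.ofReal |∫ ω, Z (T ω) ω ∂μ| ≤
          ENNReal.ofReal σ * (n : ℝ≥0∞) *
            ⨆ i : Fin n, ⨅ a : ℝ, eLpNorm (fun ω => W i ω - a) ∞ μ) := by
  intro W hW
  obtain rfl : W = _ := funext hW
  have hZ : Measurable fun ω j => Z j ω := measurable_pi_lambda _ hZm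
  have hZσ : ∀ i, StronglyMeasurable[.comap (fun ω j => Z j ω) MeasurableSpace.pi] (Z i) :=
    fun i => ((measurable_pi_apply i).comp (comap_measurable (fun ω j => Z j ω))).stronglyMeasurable
  have key (Q : ℝ≥0∞) [(ENNReal.ofReal p).HolderTriple Q 1] :=
    enorm_integral_apply_le_mul_sum_iInf_eLpNorm_condExp_sub_const (q := Q) hZ.comap_le
      (fun i => hT (measurableSet_singleton i)) hZσ hZint hmean ofReal_ne_top hnorm
  simp only [← Real.enorm_eq_ofReal_abs]
  refine ⟨fun q hp hpq => ?_, fun hp => ?_⟩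
  · have hpq : p.HolderConjugate q :=
      Real.holderConjugate_iff.mpr ⟨hp, by simpa [one_div] using hpq⟩
    have := hpq.ennrealOfReal
    refine (key (.ofReal q)).trans ?_
    rw [mul_assoc]
    gcongr
    refine (ENNReal.sum_le_card_rpow_mul_sum_rpow Finset.univ _ hpq).trans_eq ?_
    simp [iInf_eLpNorm_rpow _ hpq.symm.pos]
  · subst hp
    have : HolderTriple (ENNReal.ofReal 1) ∞ 1 := by simpa using HolderTriple.instInfty 1
    refine (key ∞).trans ?_
    rw [mul_assoc]
    gcongr
    refine (Finset.sum_le_card_nsmul _ _ _ fun i _ => le_iSup _ i).trans_eq ?_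
    simp [nsmul_eq_mul]

/-- Main theorem, `p`-norm form (bound via the conditional distribution of `T` given
`Z`): if `E[Zᵢ] = 0` and `‖Zᵢ‖_p ≤ σ`, `p ≥ 1`, `1/p + 1/q = 1`, then
`|E[Z_T]| ≤ σ n^{1/p} (Σᵢ inf_{aᵢ} E|P_{T|Z}(i|Z) - aᵢ|^q)^{1/q}`,
where for `p = 1` we take `q = ∞` with the `L^∞` norm (so that the bound reads
`σ · n · maxᵢ inf_{aᵢ} ‖P_{T|Z}(i|Z) - aᵢ‖_∞`). -/
theorem stmt11 {Ω : Type*} [MeasurableSpace Ω] (μ : Measure Ω) [IsProbabilityMeasure μ]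
    (n : ℕ) (Z : Fin n → Ω → ℝ) (T : Ω → Fin n) (hT : Measurable T)
    (hZm : ∀ i, Measurable (Z i)) (hZint : ∀ i, Integrable (Z i) μ)
    (hmean : ∀ i, ∫ ω, Z i ω ∂μ = 0)
    (p : ℝ) (hp : 1 ≤ p) (σ : ℝ) (hσ : 0 < σ)
    (hnorm : ∀ i, eLpNorm (Z i) (ENNReal.ofReal p) μ ≤ ENNReal.ofReal σ) :
    -- the conditional probability `P(T = i | Z)` as a random variable
    ∀ W : Fin n → Ω → ℝ,
      (∀ i, W i = μ[(fun ω' => if T ω' = i then (1:ℝ) else 0) |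
        MeasurableSpace.comap (fun ω' => fun j => Z j ω') MeasurableSpace.pi]) →
      -- case `1 < p` with conjugate exponent `q` finite
      (∀ q : ℝ, 1 < p → 1 / p + 1 / q = 1 →
        ENNReal.ofReal |∫ ω, Z (T ω) ω ∂μ| ≤
          ENNReal.ofReal σ * (n : ℝ≥0∞) ^ (1 / p) *
            (∑ i : Fin n, ⨅ a : ℝ,
              ∫⁻ ω, ENNReal.ofReal |W i ω - a| ^ q ∂μ) ^ (1 / q)) ∧
      -- case `p = 1`, `q = ∞` with the `L^∞` norm
      (p = 1 →
        ENNReal.ofReal |∫ ω, Z (T ω) ω ∂μ| ≤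
          ENNReal.ofReal σ * (n : ℝ≥0∞) *
            ⨆ i : Fin n, ⨅ a : ℝ, eLpNorm (fun ω => W i ω - a) ∞ μ) :=
  stmt11_general μ n Z T hT hZm hZint hmean p σ hnorm
end

section
/- Let T ∈ {1,…,n} and Z = (Z₁,…,Zₙ) be jointly distributed with E[Zᵢ] = 0 and ‖Zᵢ‖_p ≤ σ for all i, where p > 1 and 1/p + 1/q = 1. Then |E[Z_T]| ≤ σ · n^{1/p} · H(T;q), where H(T;q) = (Σₜ (P_T(t)^{1/(1−q)} + (1−P_T(t))^{1/(1−q)})^{1−q})^{1/q}. -/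
/-!
Write `Z_T = ∑ₜ Zₜ 1{T = t}`. Since `E Zₜ = 0`, for every constant `c` we have
`E[Zₜ 1_A] = E[Zₜ (1_A - c)]`, so Hölder gives `|E[Zₜ 1_A]| ≤ σ ‖1_A - c‖_q`. Minimising
`‖1_A - c‖_q^q = a (1 - c)^q + (1 - a) c^q` over `c`, where `a = P(A)`, yields exactly the
`t`-th summand of `H(T;q)^q`. Hölder's inequality for the sum over the `n` values of `T`
then produces the factor `n^{1/p}`.
-/

open MeasureTheory Set ENNReal

/-- The functional `H(T;q) = (Σₜ (P_T(t)^{1/(1-q)} + (1-P_T(t))^{1/(1-q)})^{1-q})^{1/q}`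
for `1 < q < ∞`; the `ℝ≥0∞`-valued power conventions (`0^{neg} = ∞`, `∞^{neg} = 0`)
make terms with `P_T(t) ∈ {0,1}` contribute `0`, consistent with continuity. -/
noncomputable def Hq {Ω : Type*} [MeasurableSpace Ω] (μ : MeasureTheory.Measure Ω)
    (n : ℕ) (T : Ω → Fin n) (q : ℝ) : ℝ≥0∞ :=
  (∑ t : Fin n,
    ((μ {ω | T ω = t}) ^ (1 / (1 - q)) + (1 - μ {ω | T ω = t}) ^ (1 / (1 - q)))
      ^ (1 - q)) ^ (1 / q)

theorem Real.add_rpow_one_sub_eq {u v : ℝ} (hu : 0 < u) (hv : 0 < v) (q : ℝ) :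
    (u + v) ^ (1 - q) = u ^ (1 - q) * (u / (u + v)) ^ q + v ^ (1 - q) * (v / (u + v)) ^ q := by
  have hpow {x : ℝ} (hx : 0 < x) : x ^ (1 - q) * x ^ q = x := by
    rw [← Real.rpow_add hx, sub_add_cancel, Real.rpow_one]
  have huv : 0 < u + v := add_pos hu hv
  rw [Real.div_rpow hu.le huv.le, Real.div_rpow hv.le huv.le, mul_div_assoc', mul_div_assoc',
    hpow hu, hpow hv, ← add_div, _root_.eq_div_iff (by positivity), hpow huv]

theorem exists_mul_enorm_one_sub_rpow_add_mul_enorm_rpow_eq {q : ℝ} (hq : 1 < q) {a : ℝ≥0∞}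
    (ha : a ≤ 1) :
    ∃ c : ℝ, a * ‖1 - c‖ₑ ^ q + (1 - a) * ‖c‖ₑ ^ q =
      (a ^ (1 / (1 - q)) + (1 - a) ^ (1 / (1 - q))) ^ (1 - q) := by
  have hq0 : 0 < q := one_pos.trans hq
  have hq1 : 1 - q < 0 := sub_neg.mpr hq
  have h_zero : (0 : ℝ≥0∞) ^ (1 / (1 - q)) = ∞ := ENNReal.zero_rpow_of_neg (one_div_neg.mpr hq1)
  rcases eq_or_ne a 0 with rfl | ha0
  · refine ⟨0, ?_⟩
    rw [h_zero, top_add, ENNReal.top_rpow_of_neg hq1]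
    simp [ENNReal.zero_rpow_of_pos hq0]
  rcases eq_or_ne a 1 with rfl | ha1
  · refine ⟨1, ?_⟩
    rw [tsub_self (1 : ℝ≥0∞), h_zero, add_top, ENNReal.top_rpow_of_neg hq1]
    simp [ENNReal.zero_rpow_of_pos hq0]
  have ha_top : a ≠ ∞ := ne_top_of_le_ne_top one_ne_top ha
  obtain ⟨r, hr0, hr1, rfl⟩ : ∃ r : ℝ, 0 < r ∧ r < 1 ∧ a = ENNReal.ofReal r :=
    ⟨a.toReal, toReal_pos ha0 ha_top, toReal_lt_of_lt_ofReal (by simpa using ha.lt_of_ne ha1),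
      (ofReal_toReal ha_top).symm⟩
  have h1r : 0 < 1 - r := sub_pos.mpr hr1
  set s := 1 / (1 - q)
  have hs {x : ℝ} (hx : 0 < x) : (x ^ s) ^ (1 - q) = x := by
    rw [← Real.rpow_mul hx.le, one_div_mul_cancel hq1.ne, Real.rpow_one]
  set u := r ^ s
  set v := (1 - r) ^ s
  have hu : 0 < u := Real.rpow_pos_of_pos hr0 s
  have hv : 0 < v := Real.rpow_pos_of_pos h1r s
  -- the minimiser of `c ↦ r (1 - c)^q + (1 - r) c^q`
  refine ⟨v / (u + v), ?_⟩
  have hc : 1 - v / (u + v) = u / (u + v) := by field_simp; ring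
  have h_one_sub : 1 - ENNReal.ofReal r = ENNReal.ofReal (1 - r) := by
    rw [ENNReal.ofReal_sub _ hr0.le, ENNReal.ofReal_one]
  rw [h_one_sub, ENNReal.ofReal_rpow_of_pos hr0, ENNReal.ofReal_rpow_of_pos h1r,
    ← ENNReal.ofReal_add hu.le hv.le, ENNReal.ofReal_rpow_of_pos (add_pos hu hv),
    Real.add_rpow_one_sub_eq hu hv, hs hr0, hs h1r, hc,
    Real.enorm_eq_ofReal (by positivity), Real.enorm_eq_ofReal (by positivity),
    ENNReal.ofReal_rpow_of_pos (by positivity), ENNReal.ofReal_rpow_of_pos (by positivity),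
    ← ENNReal.ofReal_mul hr0.le, ← ENNReal.ofReal_mul h1r.le,
    ← ENNReal.ofReal_add (by positivity) (by positivity)]

theorem lintegral_enorm_indicator_one_sub_const_rpow {Ω : Type*} [MeasurableSpace Ω]
    (μ : Measure Ω) {A : Set Ω} (hA : MeasurableSet A) (c q : ℝ) :
    ∫⁻ ω, ‖A.indicator 1 ω - c‖ₑ ^ q ∂μ = μ A * ‖1 - c‖ₑ ^ q + μ Aᶜ * ‖c‖ₑ ^ q := by
  rw [← lintegral_add_compl _ hA, setLIntegral_congr_fun hA (g := fun _ => ‖1 - c‖ₑ ^ q),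
    setLIntegral_congr_fun hA.compl (g := fun _ => ‖c‖ₑ ^ q), setLIntegral_const,
    setLIntegral_const, mul_comm, mul_comm (‖c‖ₑ ^ q)]
  · intro ω hω
    simp [indicator_of_notMem hω]
  · intro ω hω
    simp [indicator_of_mem hω]

theorem setIntegral_eq_integral_mul_indicator_sub_const {Ω : Type*} [MeasurableSpace Ω]
    {μ : Measure Ω} {f : Ω → ℝ} (hf : Integrable f μ) (hmean : ∫ ω, f ω ∂μ = 0)
    {A : Set Ω} (hA : MeasurableSet A) (c : ℝ) :
    ∫ ω in A, f ω ∂μ = ∫ ω, f ω * (A.indicator 1 ω - c) ∂μ := by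
  have h_mul : (fun ω => f ω * (A.indicator 1 ω - c)) = fun ω => A.indicator f ω - c * f ω := by
    funext ω
    by_cases hω : ω ∈ A <;> simp [hω, mul_sub, mul_comm]
  rw [h_mul, integral_sub (hf.indicator hA) (hf.const_mul c), integral_indicator hA,
    integral_const_mul, hmean, mul_zero, sub_zero]

theorem enorm_integral_mul_le_eLpNorm_mul_eLpNorm {Ω : Type*} [MeasurableSpace Ω]
    {μ : Measure Ω} {f g : Ω → ℝ} (hf : AEStronglyMeasurable f μ)
    (hg : AEStronglyMeasurable g μ) {p q : ℝ} (hpq : p.HolderConjugate q) :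
    ‖∫ ω, f ω * g ω ∂μ‖ₑ ≤ eLpNorm f (ENNReal.ofReal p) μ * eLpNorm g (ENNReal.ofReal q) μ := by
  have := hpq.ennrealOfReal
  calc ‖∫ ω, f ω * g ω ∂μ‖ₑ ≤ eLpNorm (fun ω => f ω * g ω) 1 μ := by
        rw [eLpNorm_one_eq_lintegral_enorm]
        exact enorm_integral_le_lintegral_enorm _
    _ ≤ _ := by
        simpa using eLpNorm_le_eLpNorm_mul_eLpNorm'_of_norm hf hg (· * ·) 1
          (.of_forall fun ω => by simp [norm_mul])

theorem enorm_setIntegral_le_of_integral_eq_zero {Ω : Type*} [MeasurableSpace Ω]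
    {μ : Measure Ω} [IsProbabilityMeasure μ] {f : Ω → ℝ} (hf : Integrable f μ)
    (hmean : ∫ ω, f ω ∂μ = 0) {p q : ℝ} (hpq : p.HolderConjugate q) {A : Set Ω}
    (hA : MeasurableSet A) :
    ‖∫ ω in A, f ω ∂μ‖ₑ ≤ eLpNorm f (ENNReal.ofReal p) μ *
      ((μ A ^ (1 / (1 - q)) + (1 - μ A) ^ (1 / (1 - q))) ^ (1 - q)) ^ (1 / q) := by
  obtain ⟨c, hc⟩ := exists_mul_enorm_one_sub_rpow_add_mul_enorm_rpow_eq hpq.symm.lt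
    (prob_le_one (μ := μ) (s := A))
  have hg : AEStronglyMeasurable (fun ω => A.indicator 1 ω - c) μ :=
    ((measurable_const.indicator hA).sub measurable_const).aestronglyMeasurable
  calc ‖∫ ω in A, f ω ∂μ‖ₑ = ‖∫ ω, f ω * (A.indicator 1 ω - c) ∂μ‖ₑ := by
        rw [setIntegral_eq_integral_mul_indicator_sub_const hf hmean hA c]
    _ ≤ eLpNorm f (ENNReal.ofReal p) μ *
          eLpNorm (fun ω => A.indicator 1 ω - c) (ENNReal.ofReal q) μ :=
        enorm_integral_mul_le_eLpNorm_mul_eLpNorm hf.1 hg hpq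
    _ = _ := by
        rw [eLpNorm_eq_lintegral_rpow_enorm_toReal (f := fun ω => A.indicator 1 ω - c)
            (by simpa using hpq.symm.pos) ofReal_ne_top,
          toReal_ofReal hpq.symm.nonneg, lintegral_enorm_indicator_one_sub_const_rpow μ hA,
          prob_compl_eq_one_sub hA, hc]

theorem ENNReal.sum_rpow_one_div_le_card_rpow_mul {ι : Type*} [Fintype ι] (x : ι → ℝ≥0∞)
    {p q : ℝ} (hpq : p.HolderConjugate q) :
    ∑ i, x i ^ (1 / q) ≤ (Fintype.card ι : ℝ≥0∞) ^ (1 / p) * (∑ i, x i) ^ (1 / q) := by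
  have h_inv : ∀ i, (x i ^ (1 / q)) ^ q = x i := fun i => by
    rw [← ENNReal.rpow_mul, one_div_mul_cancel hpq.symm.ne_zero, ENNReal.rpow_one]
  have := ENNReal.inner_le_Lp_mul_Lq Finset.univ 1 (fun i => x i ^ (1 / q)) hpq
  simpa only [Pi.one_apply, one_mul, ENNReal.one_rpow, h_inv, Finset.sum_const,
    Finset.card_univ, nsmul_eq_mul, mul_one] using this

theorem integral_comp_eq_sum_setIntegral {Ω ι E : Type*} [MeasurableSpace Ω] [Fintype ι]
    [MeasurableSpace ι] [MeasurableSingletonClass ι] [NormedAddCommGroup E] [NormedSpace ℝ E]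
    {μ : Measure Ω} {Z : ι → Ω → E} {T : Ω → ι} (hT : Measurable T)
    (hZ : ∀ i, Integrable (Z i) μ) :
    ∫ ω, Z (T ω) ω ∂μ = ∑ t, ∫ ω in {ω | T ω = t}, Z t ω ∂μ := by
  have hA (t : ι) : MeasurableSet {ω | T ω = t} := hT (measurableSet_singleton t)
  have h_sum (ω : Ω) : Z (T ω) ω = ∑ t, {ω | T ω = t}.indicator (Z t) ω := by
    rw [Finset.sum_eq_single_of_mem (T ω) (Finset.mem_univ _)]
    · exact (indicator_of_mem (s := {ω | T ω = T ω}) rfl _).symm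
    · exact fun t _ ht => indicator_of_notMem (s := {ω | T ω = t}) (Ne.symm ht) _
  simp_rw [h_sum, ← integral_indicator (hA _)]
  exact integral_finsetSum _ fun t _ => (hZ t).indicator (hA t)

theorem stmt12_general {Ω : Type*} [MeasurableSpace Ω] (μ : Measure Ω) [IsProbabilityMeasure μ]
    (n : ℕ) (Z : Fin n → Ω → ℝ) (T : Ω → Fin n) (hT : Measurable T)
    (hZint : ∀ i, Integrable (Z i) μ)
    (hmean : ∀ i, ∫ ω, Z i ω ∂μ = 0)
    (p q : ℝ) (hp : 1 < p) (hpq : 1 / p + 1 / q = 1)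
    (σ : ℝ)
    (hnorm : ∀ i, eLpNorm (Z i) (ENNReal.ofReal p) μ ≤ ENNReal.ofReal σ) :
    ENNReal.ofReal |∫ ω, Z (T ω) ω ∂μ| ≤
      ENNReal.ofReal σ * (n : ℝ≥0∞) ^ (1 / p) * Hq μ n T q := by
  have hpq : p.HolderConjugate q :=
    Real.holderConjugate_iff.mpr ⟨hp, by simpa only [one_div] using hpq⟩
  rw [← Real.enorm_eq_ofReal_abs, integral_comp_eq_sum_setIntegral hT hZint, Hq, mul_assoc]
  calc ‖∑ t, ∫ ω in {ω | T ω = t}, Z t ω ∂μ‖ₑ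
      ≤ ∑ t, ‖∫ ω in {ω | T ω = t}, Z t ω ∂μ‖ₑ := enorm_sum_le _ _
    _ ≤ ∑ t, ENNReal.ofReal σ * ((μ {ω | T ω = t} ^ (1 / (1 - q)) +
          (1 - μ {ω | T ω = t}) ^ (1 / (1 - q))) ^ (1 - q)) ^ (1 / q) := by
        gcongr with t
        exact (enorm_setIntegral_le_of_integral_eq_zero (hZint t) (hmean t) hpq
          (hT (measurableSet_singleton t))).trans (mul_le_mul_left (hnorm t) _)
    _ ≤ _ := by
        rw [← Finset.mul_sum]
        gcongr
        refine (ENNReal.sum_rpow_one_div_le_card_rpow_mul _ hpq).trans_eq ?_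
        rw [Fintype.card_fin]

/-- Main theorem, marginal form: if `E[Zᵢ] = 0`, `‖Zᵢ‖_p ≤ σ`, `p > 1`,
`1/p + 1/q = 1`, then `|E[Z_T]| ≤ σ n^{1/p} H(T;q)`. -/
theorem stmt12 {Ω : Type*} [MeasurableSpace Ω] (μ : Measure Ω) [IsProbabilityMeasure μ]
    (n : ℕ) (Z : Fin n → Ω → ℝ) (T : Ω → Fin n) (hT : Measurable T)
    (hZm : ∀ i, Measurable (Z i)) (hZint : ∀ i, Integrable (Z i) μ)
    (hmean : ∀ i, ∫ ω, Z i ω ∂μ = 0)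
    (p q : ℝ) (hp : 1 < p) (hpq : 1 / p + 1 / q = 1)
    (σ : ℝ) (hσ : 0 < σ)
    (hnorm : ∀ i, eLpNorm (Z i) (ENNReal.ofReal p) μ ≤ ENNReal.ofReal σ) :
    ENNReal.ofReal |∫ ω, Z (T ω) ω ∂μ| ≤
      ENNReal.ofReal σ * (n : ℝ≥0∞) ^ (1 / p) * Hq μ n T q :=
  stmt12_general μ n Z T hT hZint hmean p q hp hpq σ hnorm
end

section
/- Let T ∈ {1,…,n} and Z = (Z₁,…,Zₙ) be jointly distributed with E[Zᵢ] = 0 and ‖Zᵢ‖₁ = E|Zᵢ| ≤ σ for all i. If T is not almost surely constant, then |E[Z_T]| ≤ σ·n/2; if T is almost surely constant, then E[Z_T] = 0. -/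
open MeasureTheory Set ENNReal

/-- The `p = 1` case of the main theorem: if `E[Zᵢ] = 0` and `E|Zᵢ| ≤ σ` for all `i`,
then `|E[Z_T]| ≤ σ n / 2` whenever `T` is not almost surely constant, while
`E[Z_T] = 0` when `T` is almost surely constant. -/
theorem stmt13 {Ω : Type*} [MeasurableSpace Ω] (μ : Measure Ω) [IsProbabilityMeasure μ]
    (n : ℕ) (Z : Fin n → Ω → ℝ) (T : Ω → Fin n) (hT : Measurable T)
    (hZm : ∀ i, Measurable (Z i)) (hZint : ∀ i, Integrable (Z i) μ)
    (hmean : ∀ i, ∫ ω, Z i ω ∂μ = 0)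
    (σ : ℝ) (hσ : 0 < σ) (hnorm : ∀ i, ∫ ω, |Z i ω| ∂μ ≤ σ) :
    ((¬ ∃ c : Fin n, ∀ᵐ ω ∂μ, T ω = c) →
      |∫ ω, Z (T ω) ω ∂μ| ≤ σ * n / 2) ∧
    ((∃ c : Fin n, ∀ᵐ ω ∂μ, T ω = c) →
      ∫ ω, Z (T ω) ω ∂μ = 0) := by
  have hA : ∀ i : Fin n, MeasurableSet (T ⁻¹' {i}) :=
    fun i => hT (measurableSet_singleton i)
  have hdecomp : (fun ω => Z (T ω) ω)
      = fun ω => ∑ i : Fin n, Set.indicator (T ⁻¹' {i}) (Z i) ω := by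
    funext ω
    rw [Finset.sum_eq_single (T ω)]
    · simp [Set.indicator_of_mem, Set.mem_preimage]
    · intro i _ hi
      exact Set.indicator_of_notMem (by simpa [Set.mem_preimage] using (fun h => hi h.symm)) _
    · intro h; exact absurd (Finset.mem_univ _) h
  have hint : ∀ i : Fin n, Integrable (Set.indicator (T ⁻¹' {i}) (Z i)) μ :=
    fun i => (hZint i).indicator (hA i)
  have hIntTotal : ∫ ω, Z (T ω) ω ∂μ = ∑ i : Fin n, ∫ ω in T ⁻¹' {i}, Z i ω ∂μ := by
    rw [hdecomp, integral_finset_sum _ (fun i _ => hint i)]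
    exact Finset.sum_congr rfl fun i _ => integral_indicator (hA i)
  constructor
  · intro _
    have hbound : ∀ i : Fin n, |∫ ω in T ⁻¹' {i}, Z i ω ∂μ| ≤ σ / 2 := by
      intro i
      set A := T ⁻¹' {i}
      have hsplit : (∫ ω in A, Z i ω ∂μ) + ∫ ω in Aᶜ, Z i ω ∂μ = 0 := by
        rw [integral_add_compl (hA i) (hZint i)]; exact hmean i
      have habs : (∫ ω in A, |Z i ω| ∂μ) + ∫ ω in Aᶜ, |Z i ω| ∂μ ≤ σ := by
        rw [integral_add_compl (hA i) (hZint i).abs]; exact hnorm i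
      have h1 : |∫ ω in A, Z i ω ∂μ| ≤ ∫ ω in A, |Z i ω| ∂μ :=
        by simpa [Real.norm_eq_abs] using norm_integral_le_integral_norm (Z i)
      have h2 : |∫ ω in Aᶜ, Z i ω ∂μ| ≤ ∫ ω in Aᶜ, |Z i ω| ∂μ :=
        by simpa [Real.norm_eq_abs] using norm_integral_le_integral_norm (Z i)
      have heq : |∫ ω in A, Z i ω ∂μ| = |∫ ω in Aᶜ, Z i ω ∂μ| := by
        have : (∫ ω in A, Z i ω ∂μ) = -∫ ω in Aᶜ, Z i ω ∂μ := by linarith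
        rw [this, abs_neg]
      linarith
    calc |∫ ω, Z (T ω) ω ∂μ| = |∑ i : Fin n, ∫ ω in T ⁻¹' {i}, Z i ω ∂μ| := by
          rw [hIntTotal]
      _ ≤ ∑ i : Fin n, |∫ ω in T ⁻¹' {i}, Z i ω ∂μ| := Finset.abs_sum_le_sum_abs _ _
      _ ≤ ∑ _i : Fin n, σ / 2 := Finset.sum_le_sum fun i _ => hbound i
      _ = σ * n / 2 := by simp [Finset.sum_const]; ring
  · rintro ⟨c, hc⟩
    have : ∫ ω, Z (T ω) ω ∂μ = ∫ ω, Z c ω ∂μ := by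
      apply integral_congr_ae
      filter_upwards [hc] with ω hω
      rw [hω]
    rw [this, hmean c]
end

section
/- For any random variable T taking values in {1,…,n} and any 1 < q < ∞, the functional H(T;q) = (Σₜ (P_T(t)^{1/(1−q)} + (1−P_T(t))^{1/(1−q)})^{1−q})^{1/q} satisfies 0 ≤ H(T;q) ≤ 1, and H(T;q) = 0 if and only if T is deterministic (some P_T(t) = 1). -/
open MeasureTheory Set ENNReal

/-! Since `1 - q < 0`, the map `x ↦ x ^ (1 - q)` is antitone, so dropping the second summand
shows that the `t`-th term is at most `P_T(t)`; summing gives `H(T;q) ≤ 1`. A term vanishes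
exactly when one of its summands is `∞`, i.e. when `P_T(t) ∈ {0, 1}`, and a probability vector
with all entries in `{0, 1}` is a point mass. -/

namespace ENNReal

lemma rpow_le_rpow_of_nonpos {x y : ℝ≥0∞} {z : ℝ} (hxy : x ≤ y) (hz : z ≤ 0) :
    y ^ z ≤ x ^ z := by
  rw [← neg_neg z, rpow_neg y (-z), rpow_neg x (-z)]
  exact ENNReal.inv_le_inv' (rpow_le_rpow hxy (neg_nonneg.mpr hz))

variable {p : ℝ}

lemma rpow_add_rpow_rpow_le_left (hp : p < 0) (x y : ℝ≥0∞) :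
    (x ^ (1 / p) + y ^ (1 / p)) ^ p ≤ x :=
  calc (x ^ (1 / p) + y ^ (1 / p)) ^ p
      ≤ (x ^ (1 / p)) ^ p := rpow_le_rpow_of_nonpos le_self_add hp.le
    _ = x := by rw [← rpow_mul, one_div_mul_cancel hp.ne, rpow_one]

lemma rpow_add_rpow_rpow_eq_zero_iff (hp : p < 0) {x y : ℝ≥0∞}
    (hx : x ≠ ⊤) (hy : y ≠ ⊤) :
    (x ^ (1 / p) + y ^ (1 / p)) ^ p = 0 ↔ x = 0 ∨ y = 0 := by
  simp [rpow_eq_zero_iff, hp, hp.not_gt, rpow_eq_top_iff, hx, hy]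

lemma forall_eq_zero_or_eq_one_iff_of_sum_eq_one {ι : Type*} [Fintype ι] [DecidableEq ι]
    {f : ι → ℝ≥0∞} (hf : ∑ i, f i = 1) :
    (∀ i, f i = 0 ∨ f i = 1) ↔ ∃ i, f i = 1 := by
  constructor
  · intro h
    by_contra! hne
    have : ∑ i, f i = 0 := Finset.sum_eq_zero fun i _ => (h i).resolve_right (hne i)
    exact zero_ne_one (this.symm.trans hf)
  · rintro ⟨i, hi⟩ j
    have hrest : ∑ k ∈ Finset.univ.erase i, f k = 0 := by
      rw [← Finset.add_sum_erase _ _ (Finset.mem_univ i), hi] at hf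
      simpa using hf
    by_cases hji : j = i
    · exact Or.inr (hji ▸ hi)
    · exact Or.inl <| Finset.sum_eq_zero_iff.mp hrest j <|
        Finset.mem_erase_of_ne_of_mem hji (Finset.mem_univ j)

end ENNReal

lemma sum_measure_fiber_eq_one {Ω α : Type*} [MeasurableSpace Ω] [MeasurableSpace α]
    [MeasurableSingletonClass α] [Fintype α] (μ : Measure Ω) [IsProbabilityMeasure μ]
    {T : Ω → α} (hT : Measurable T) : ∑ t, μ {ω | T ω = t} = 1 := by
  have h := sum_measure_preimage_singleton (μ := μ) Finset.univ fun t _ =>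
    hT (measurableSet_singleton t)
  simp only [Finset.coe_univ, preimage_univ, measure_univ] at h
  exact h

/-- For `1 < q < ∞`: `0 ≤ H(T;q) ≤ 1`, and `H(T;q) = 0` iff `T` is deterministic. -/
theorem stmt14 {Ω : Type*} [MeasurableSpace Ω] (μ : Measure Ω) [IsProbabilityMeasure μ]
    (n : ℕ) (T : Ω → Fin n) (hT : Measurable T) (q : ℝ) (hq : 1 < q) :
    0 ≤ Hq μ n T q ∧ Hq μ n T q ≤ 1 ∧
      (Hq μ n T q = 0 ↔ ∃ t : Fin n, μ {ω | T ω = t} = 1) := by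
  have hp : 1 - q < 0 := by linarith
  have hq_inv : 0 < 1 / q := by positivity
  have hP := sum_measure_fiber_eq_one μ hT
  have hterm (x : ℝ≥0∞) (hx : x ≤ 1) :
      (x ^ (1 / (1 - q)) + (1 - x) ^ (1 / (1 - q))) ^ (1 - q) = 0 ↔ x = 0 ∨ x = 1 := by
    rw [rpow_add_rpow_rpow_eq_zero_iff hp (ne_top_of_le_ne_top one_ne_top hx)
      (ne_top_of_le_ne_top one_ne_top tsub_le_self), tsub_eq_zero_iff_le, hx.ge_iff_eq]
  refine ⟨zero_le, rpow_le_one ?_ hq_inv.le, ?_⟩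
  · exact hP ▸ Finset.sum_le_sum fun t _ => rpow_add_rpow_rpow_le_left hp _ _
  · rw [Hq, rpow_eq_zero_iff_of_pos hq_inv, Finset.sum_eq_zero_iff]
    simp only [Finset.mem_univ, true_implies, hterm _ prob_le_one]
    exact forall_eq_zero_or_eq_one_iff_of_sum_eq_one hP
end
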